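/- The conjugates of the recursion operators by multiplication by H are given by M_H⁻¹ ∘ R₊ ∘ M_H = γ • (M_x ∘ G(M_S + β•D)) and M_H ∘ R₋ ∘ M_H⁻¹ = γ • (M_x ∘ G(M_S − β•D)) as R-linear endomorphisms of formal Laurent series, where G(M_S ± β•D) := Σ_{i=0}^M g_i (M_S ± β•D)^i. (This is the identity V_± := γ⁻¹ x⁻¹ e^{∓β⁻¹ξ} ∘ R_± ∘ e^{±β⁻¹ξ} = G(Δ_±), with H = e^{β⁻¹ξ(x)} and Δ_± = S(x) ± βD.) -/

import Mathlib

open Polynomial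

/-- The Euler operator `D = x d/dx` on formal Laurent series: `(D f)_n = n • f_n`. -/
noncomputable def eulerD (R : Type*) [CommRing R] : Module.End R (LaurentSeries R) where
  toFun f :=
    { coeff := fun n => n • f.coeff n
      isPWO_support' := f.isPWO_support'.mono (fun n hn => by
        simp only [Function.mem_support, ne_eq] at hn ⊢
        exact fun h => hn (by rw [h, smul_zero])) }
  map_add' f g := by
    ext n
    simp [smul_add]
  map_smul' r f := by
    ext n
    simp only [HahnSeries.coeff_smul, RingHom.id_apply, zsmul_eq_mul, smul_eq_mul]
    ring

/-- Multiplication by a fixed Laurent series `u`, as an `R`-linear endomorphism. -/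
noncomputable def mulOp (R : Type*) [CommRing R] (u : LaurentSeries R) :
    Module.End R (LaurentSeries R) where
  toFun f := u * f
  map_add' f g := mul_add u f g
  map_smul' r f := by
    simp only [RingHom.id_apply]
    rw [← HahnSeries.C_mul_eq_smul, ← HahnSeries.C_mul_eq_smul, mul_left_comm]

/-- Multiplication by `x` on formal Laurent series. -/
noncomputable def mulX (R : Type*) [CommRing R] : Module.End R (LaurentSeries R) :=
  mulOp R (HahnSeries.single (1 : ℤ) (1 : R))

/-- The recursion operator `R₊ = γ x G(β D)`. -/
noncomputable def Rplus (R : Type*) [CommRing R] (β γ : R) (G : R[X]) :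
    Module.End R (LaurentSeries R) :=
  γ • (mulX R ∘ₗ Polynomial.aeval (β • eulerD R) G)

/-- The recursion operator `R₋ = γ x G(−β D)`. -/
noncomputable def Rminus (R : Type*) [CommRing R] (β γ : R) (G : R[X]) :
    Module.End R (LaurentSeries R) :=
  γ • (mulX R ∘ₗ Polynomial.aeval ((-β) • eulerD R) G)


/-- The polynomial `S(x) = Σ_{k=1}^L k s_k x^k`, as a (Laurent) series. -/
noncomputable def Spoly (R : Type*) [CommRing R] (L : ℕ) (s : ℕ → R) : LaurentSeries R :=
  ∑ k ∈ Finset.Icc 1 L, ((k : R) * s k) • HahnSeries.single (k : ℤ) (1 : R)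

/-!
By the Leibniz rule, `M_H⁻¹ ∘ D ∘ M_H = M_{D H / H} + D`, and `β • D H / H = S`; likewise
`D (H⁻¹) / H⁻¹ = -D H / H`, so `M_H ∘ (-β • D) ∘ M_H⁻¹ = M_S - β • D`. Conjugation by the
invertible operator `M_H` is an algebra automorphism of `Module.End R (LaurentSeries R)`, hence
commutes with evaluating `G`, and it commutes with `M_x` because multiplication is commutative.
-/

section

variable {R : Type*} [CommRing R]

-- `LaurentSeries R` carries no `IsScalarTower R _ _` instance, so `smul_mul_assoc` does not apply.
lemma laurent_smul_mul_assoc (c : R) (u v : LaurentSeries R) : c • u * v = c • (u * v) := by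
  rw [← HahnSeries.C_mul_eq_smul, ← HahnSeries.C_mul_eq_smul, mul_assoc]

lemma laurent_mul_smul_comm (c : R) (u v : LaurentSeries R) : u * c • v = c • (u * v) := by
  rw [← HahnSeries.C_mul_eq_smul, ← HahnSeries.C_mul_eq_smul, mul_left_comm]

@[simp] lemma coeff_eulerD (f : LaurentSeries R) (n : ℤ) :
    (eulerD R f).coeff n = n • f.coeff n := rfl

lemma support_eulerD_subset (f : LaurentSeries R) : (eulerD R f).support ⊆ f.support :=
  fun n hn h => hn (by rw [coeff_eulerD, h, smul_zero])

lemma eulerD_mul (f g : LaurentSeries R) :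
    eulerD R (f * g) = eulerD R f * g + f * eulerD R g := by
  ext n
  rw [HahnSeries.coeff_add, HahnSeries.coeff_mul_left' f.isPWO_support (support_eulerD_subset f),
    HahnSeries.coeff_mul_right' g.isPWO_support (support_eulerD_subset g), coeff_eulerD,
    HahnSeries.coeff_mul, Finset.smul_sum, ← Finset.sum_add_distrib]
  refine Finset.sum_congr rfl fun ij hij => ?_
  rw [← (Finset.mem_antidiagonal.mp hij).2.2, coeff_eulerD, coeff_eulerD, add_smul,
    smul_mul_assoc, mul_smul_comm]

lemma eulerD_one : eulerD R (1 : LaurentSeries R) = 0 := by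
  ext n
  by_cases h : n = 0 <;> simp [HahnSeries.coeff_one, h]

lemma mul_eulerD_eq_neg_of_mul_eq_one {u v : LaurentSeries R} (h : u * v = 1) :
    u * eulerD R v = -(v * eulerD R u) := by
  have := eulerD_mul u v
  rw [h, eulerD_one] at this
  linear_combination -this

@[simp] lemma mulOp_apply (u f : LaurentSeries R) : mulOp R u f = u * f := rfl

lemma mulOp_comp_mulOp (u v : LaurentSeries R) :
    mulOp R u ∘ₗ mulOp R v = mulOp R (u * v) :=
  LinearMap.ext fun f => (mul_assoc u v f).symm

lemma mulOp_one : mulOp R (1 : LaurentSeries R) = LinearMap.id :=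
  LinearMap.ext one_mul

lemma mulOp_comp_smul_eulerD_comp_mulOp {u v : LaurentSeries R} (h : v * u = 1) (c : R) :
    mulOp R v ∘ₗ (c • eulerD R) ∘ₗ mulOp R u = mulOp R (v * c • eulerD R u) + c • eulerD R := by
  ext1 f
  simp only [LinearMap.comp_apply, LinearMap.add_apply, LinearMap.smul_apply, mulOp_apply,
    eulerD_mul, smul_add, mul_add, laurent_mul_smul_comm, laurent_smul_mul_assoc, ← mul_assoc,
    h, one_mul]

lemma mulOp_comp_aeval_comp_mulOp {u v : LaurentSeries R} (h : u * v = 1)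
    (a : Module.End R (LaurentSeries R)) (p : R[X]) :
    mulOp R v ∘ₗ aeval a p ∘ₗ mulOp R u = aeval (mulOp R v ∘ₗ a ∘ₗ mulOp R u) p := by
  let e : LaurentSeries R ≃ₗ[R] LaurentSeries R := .ofLinearMap (mulOp R v) (mulOp R u)
    (by rw [mulOp_comp_mulOp, mul_comm, h, mulOp_one]) (by rw [mulOp_comp_mulOp, h, mulOp_one])
  exact (aeval_algHom_apply (e.conjAlgEquiv R) a p).symm

lemma mulOp_comp_smul_mulX_comp_aeval_comp_mulOp {u v : LaurentSeries R} (h : u * v = 1) (γ : R)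
    (a : Module.End R (LaurentSeries R)) (p : R[X]) :
    mulOp R v ∘ₗ (γ • (mulX R ∘ₗ aeval a p)) ∘ₗ mulOp R u =
      γ • (mulX R ∘ₗ aeval (mulOp R v ∘ₗ a ∘ₗ mulOp R u) p) := by
  rw [← mulOp_comp_aeval_comp_mulOp h, LinearMap.smul_comp, LinearMap.comp_smul]
  simp only [mulX, ← LinearMap.comp_assoc, mulOp_comp_mulOp, mul_comm v]

end

theorem conjugated_recursion_operators_general (R : Type*) [CommRing R] (β γ : R)
    (G : Polynomial R)
    (L : ℕ) (s : ℕ → R)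
    (H Hinv : LaurentSeries R)
    (hHinv : H * Hinv = 1)
    (hDH : β • (eulerD R H) = Spoly R L s * H) :
    mulOp R Hinv ∘ₗ Rplus R β γ G ∘ₗ mulOp R H =
      γ • (mulX R ∘ₗ
        Polynomial.aeval (mulOp R (Spoly R L s) + β • eulerD R) G) ∧
    mulOp R H ∘ₗ Rminus R β γ G ∘ₗ mulOp R Hinv =
      γ • (mulX R ∘ₗ
        Polynomial.aeval (mulOp R (Spoly R L s) - β • eulerD R) G) := by
  have hHinvH : Hinv * H = 1 := by rw [mul_comm, hHinv]
  have hS_plus : Hinv * β • eulerD R H = Spoly R L s := by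
    rw [hDH, mul_left_comm, hHinvH, mul_one]
  have hS_minus : H * (-β) • eulerD R Hinv = Spoly R L s := by
    rw [laurent_mul_smul_comm, mul_eulerD_eq_neg_of_mul_eq_one hHinv, neg_smul, smul_neg, neg_neg,
      ← laurent_mul_smul_comm, hS_plus]
  constructor
  · rw [Rplus, mulOp_comp_smul_mulX_comp_aeval_comp_mulOp hHinv,
      mulOp_comp_smul_eulerD_comp_mulOp hHinvH, hS_plus]
  · rw [Rminus, mulOp_comp_smul_mulX_comp_aeval_comp_mulOp hHinvH,
      mulOp_comp_smul_eulerD_comp_mulOp hHinv, hS_minus,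
      neg_smul (M := Module.End R (LaurentSeries R)), sub_eq_add_neg]

/-- the conjugates of the recursion operators by `M_H` are
`M_H⁻¹ ∘ R₊ ∘ M_H = γ (M_x ∘ G(M_S + β D))` and
`M_H ∘ R₋ ∘ M_H⁻¹ = γ (M_x ∘ G(M_S − β D))`. -/
theorem conjugated_recursion_operators (R : Type*) [CommRing R] (β γ : R)
    (G : Polynomial R) (hG : G.coeff 0 = 1)
    (L : ℕ) (hL : 1 ≤ L) (s : ℕ → R)
    (H Hinv : LaurentSeries R)
    (hHinv : H * Hinv = 1)
    (hH0 : H.coeff 0 = 1) (hHneg : ∀ n : ℤ, n < 0 → H.coeff n = 0)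
    (hDH : β • (eulerD R H) = Spoly R L s * H) :
    mulOp R Hinv ∘ₗ Rplus R β γ G ∘ₗ mulOp R H =
      γ • (mulX R ∘ₗ
        Polynomial.aeval (mulOp R (Spoly R L s) + β • eulerD R) G) ∧
    mulOp R H ∘ₗ Rminus R β γ G ∘ₗ mulOp R Hinv =
      γ • (mulX R ∘ₗ
        Polynomial.aeval (mulOp R (Spoly R L s) - β • eulerD R) G) :=
  conjugated_recursion_operators_general R β γ G L s H Hinv hHinv hDH
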